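/- Let w ∈ ℝⁿ with ∑ᵢ wᵢ = 1 and let v* be the Euclidean projection of w onto the probability simplex Δₙ. Then v* minimizes the range objective f(v) = maxᵢ(vᵢ − wᵢ) − minᵢ(vᵢ − wᵢ) over all v ∈ Δₙ, and it is the unique such minimizer. -/

import Mathlib

/-!
A Euclidean projection `v` of `w` onto the simplex cannot gain by moving a small mass `ε` from a
coordinate `j` with `v j > 0` to another coordinate `i`; the first-order term of that move shows
that `v - w` is minimal on the support of `v`. Writing `c` for this minimal value,
`v k - w k = max c (-w k)` for every `k`, which is the water-filling form.

Now let `u` be another point of the simplex. Since `u` and `v` have the same total mass,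
`u k - w k ≥ v k - w k ≥ c` for some `k`, and `u k - w k ≥ -w k` for every `k`; hence
`max (v - w) ≤ max (u - w)`. On the other hand `min (u - w) ≥ c` would force `u ≥ v`
coordinatewise, hence `u = v`. So `min (u - w) ≤ c = min (v - w)`, with equality only for `u = v`.
-/

open Finset

variable {ι : Type*} [Fintype ι]

noncomputable def spread [Nonempty ι] (f : ι → ℝ) : ℝ :=
  univ.sup' univ_nonempty f - univ.inf' univ_nonempty f

section Projection

variable {w v : ι → ℝ}

lemma sum_sq_add_single_sub_single [DecidableEq ι] {i j : ι} (hij : i ≠ j) (ε : ℝ) :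
    ∑ k, ((v + Pi.single i ε - Pi.single j ε : ι → ℝ) k - w k) ^ 2
      = ∑ k, (v k - w k) ^ 2 + 2 * ε * ((v i - w i) - (v j - w j)) + 2 * ε ^ 2 := by
  rw [add_assoc, ← sub_eq_iff_eq_add', ← sum_sub_distrib,
    Fintype.sum_eq_add i j hij fun k ⟨hki, hkj⟩ => by simp [hki, hkj]]
  simp only [Pi.add_apply, Pi.sub_apply, Pi.single_eq_same, Pi.single_eq_of_ne hij,
    Pi.single_eq_of_ne hij.symm]
  ring

lemma add_single_sub_single_mem_stdSimplex [DecidableEq ι] (hv : v ∈ stdSimplex ℝ ι)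
    {i j : ι} {ε : ℝ} (hε : 0 ≤ ε) (hεj : ε ≤ v j) :
    v + Pi.single i ε - Pi.single j ε ∈ stdSimplex ℝ ι := by
  refine ⟨fun k => ?_, ?_⟩
  · simp only [Pi.add_apply, Pi.sub_apply, Pi.single_apply]
    split_ifs <;> subst_vars <;> linarith [hv.1 k]
  · simp [sum_add_distrib, sum_sub_distrib, hv.2]

lemma sub_le_sub_of_isMinOn_sum_sq
    (hmin : IsMinOn (fun u : ι → ℝ => ∑ k, (u k - w k) ^ 2) (stdSimplex ℝ ι) v)
    (hv : v ∈ stdSimplex ℝ ι) (i : ι) {j : ι} (hj : 0 < v j) : v j - w j ≤ v i - w i := by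
  classical
  rcases eq_or_ne i j with rfl | hij
  · exact le_rfl
  by_contra! hlt
  set ε := min (v j) (((v j - w j) - (v i - w i)) / 2)
  have hε : 0 < ε := lt_min hj (by linarith)
  have hε_gap : ε ≤ ((v j - w j) - (v i - w i)) / 2 := min_le_right _ _
  have hmove := isMinOn_iff.mp hmin _
    (add_single_sub_single_mem_stdSimplex hv (i := i) hε.le (min_le_left _ _))
  rw [sum_sq_add_single_sub_single hij] at hmove
  nlinarith

lemma exists_sub_eq_max_of_isMinOn_sum_sq
    (hmin : IsMinOn (fun u : ι → ℝ => ∑ k, (u k - w k) ^ 2) (stdSimplex ℝ ι) v)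
    (hv : v ∈ stdSimplex ℝ ι) : ∃ i₀, ∀ k, v k - w k = max (v i₀ - w i₀) (-w k) := by
  obtain ⟨i₀, -, hi₀⟩ :=
    exists_lt_of_sum_lt (f := 0) (by simp [hv.2] : ∑ _k : ι, (0 : ℝ) < ∑ k, v k)
  refine ⟨i₀, fun k => ?_⟩
  have hmin_i₀ := sub_le_sub_of_isMinOn_sum_sq hmin hv k hi₀
  rcases (hv.1 k).lt_or_eq with hk | hk
  · have := sub_le_sub_of_isMinOn_sum_sq hmin hv i₀ hk
    rw [max_eq_left (by linarith)]
    linarith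
  · rw [← hk, max_eq_right (by linarith)]
    ring

end Projection

section WaterFilling

variable {w v u : ι → ℝ}

lemma eq_of_le_sub_of_sub_eq_max {c : ℝ} (hv : ∀ k, v k - w k = max c (-w k))
    (hu : ∀ k, 0 ≤ u k) (hsum : ∑ k, u k = ∑ k, v k) (hc : ∀ k, c ≤ u k - w k) :
    u = v := by
  have hle : ∀ k ∈ univ, v k ≤ u k := fun k _ => by
    linarith [hv k, max_le (hc k) (by linarith [hu k] : -w k ≤ u k - w k)]
  funext k
  exact ((sum_eq_sum_iff_of_le hle).mp hsum.symm k (mem_univ k)).symm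

variable [Nonempty ι] {i₀ : ι} (hv : ∀ k, v k - w k = max (v i₀ - w i₀) (-w k))
include hv

lemma inf'_sub_eq_of_sub_eq_max : univ.inf' univ_nonempty (fun k => v k - w k) = v i₀ - w i₀ :=
  le_antisymm (inf'_le _ (mem_univ i₀))
    (le_inf' _ _ fun k _ => (hv k).ge.trans' (le_max_left _ _))

lemma inf'_sub_le_of_sub_eq_max (hu : ∀ k, 0 ≤ u k) (hsum : ∑ k, u k = ∑ k, v k) :
    univ.inf' univ_nonempty (fun k => u k - w k) ≤ v i₀ - w i₀ := by
  by_contra! hlt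
  have huv := eq_of_le_sub_of_sub_eq_max hv hu hsum fun k => hlt.le.trans (inf'_le _ (mem_univ k))
  subst huv
  exact hlt.ne' (inf'_sub_eq_of_sub_eq_max hv)

lemma sup'_sub_le_of_sub_eq_max (hu : ∀ k, 0 ≤ u k) (hsum : ∑ k, u k = ∑ k, v k) :
    univ.sup' univ_nonempty (fun k => v k - w k)
      ≤ univ.sup' univ_nonempty (fun k => u k - w k) := by
  obtain ⟨k₀, -, hk₀⟩ := exists_le_of_sum_le univ_nonempty hsum.ge
  have hle_sup : ∀ k, u k - w k ≤ univ.sup' univ_nonempty (fun k => u k - w k) :=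
    fun k => le_sup' (fun k => u k - w k) (mem_univ k)
  refine sup'_le _ _ fun k _ => (hv k).trans_le (max_le ?_ ?_)
  · linarith [hv k₀, le_max_left (v i₀ - w i₀) (-w k₀), hle_sup k₀]
  · linarith [hu k, hle_sup k]

lemma spread_sub_le_of_sub_eq_max (hu : ∀ k, 0 ≤ u k) (hsum : ∑ k, u k = ∑ k, v k) :
    spread (fun k => v k - w k) ≤ spread (fun k => u k - w k) := by
  unfold spread
  linarith [inf'_sub_eq_of_sub_eq_max hv, inf'_sub_le_of_sub_eq_max hv hu hsum,
    sup'_sub_le_of_sub_eq_max hv hu hsum]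

lemma eq_of_spread_sub_eq_of_sub_eq_max (hu : ∀ k, 0 ≤ u k) (hsum : ∑ k, u k = ∑ k, v k)
    (heq : spread (fun k => u k - w k) = spread (fun k => v k - w k)) : u = v := by
  unfold spread at heq
  have hinf : v i₀ - w i₀ ≤ univ.inf' univ_nonempty (fun k => u k - w k) := by
    linarith [inf'_sub_eq_of_sub_eq_max hv, sup'_sub_le_of_sub_eq_max hv hu hsum]
  exact eq_of_le_sub_of_sub_eq_max hv hu hsum fun k => hinf.trans (inf'_le _ (mem_univ k))

end WaterFilling

theorem stmt18_general (n : ℕ) (w v : Fin (n + 1) → ℝ)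
    (hv0 : ∀ i, 0 ≤ v i) (hv1 : ∑ i, v i = 1)
    (hmin : ∀ u : Fin (n + 1) → ℝ, (∀ i, 0 ≤ u i) → ∑ i, u i = 1 →
      ∑ i, (v i - w i) ^ 2 ≤ ∑ i, (u i - w i) ^ 2) :
    (∀ u : Fin (n + 1) → ℝ, (∀ i, 0 ≤ u i) → ∑ i, u i = 1 →
      Finset.univ.sup' Finset.univ_nonempty (fun i => v i - w i)
          - Finset.univ.inf' Finset.univ_nonempty (fun i => v i - w i)
        ≤ Finset.univ.sup' Finset.univ_nonempty (fun i => u i - w i)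
          - Finset.univ.inf' Finset.univ_nonempty (fun i => u i - w i)) ∧
    (∀ u : Fin (n + 1) → ℝ, (∀ i, 0 ≤ u i) → ∑ i, u i = 1 →
      Finset.univ.sup' Finset.univ_nonempty (fun i => u i - w i)
          - Finset.univ.inf' Finset.univ_nonempty (fun i => u i - w i)
        = Finset.univ.sup' Finset.univ_nonempty (fun i => v i - w i)
          - Finset.univ.inf' Finset.univ_nonempty (fun i => v i - w i) → u = v) := by
  have hv : v ∈ stdSimplex ℝ (Fin (n + 1)) := ⟨hv0, hv1⟩
  obtain ⟨i₀, hwater⟩ := exists_sub_eq_max_of_isMinOn_sum_sq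
    (isMinOn_iff.mpr fun u hu => hmin u hu.1 hu.2) hv
  exact ⟨fun u hu0 hu1 => spread_sub_le_of_sub_eq_max hwater hu0 (hu1.trans hv1.symm),
    fun u hu0 hu1 heq => eq_of_spread_sub_eq_of_sub_eq_max hwater hu0 (hu1.trans hv1.symm) heq⟩

/-- The Euclidean projection `v` of `w` (with `∑ w = 1`) onto the probability simplex
minimizes the range objective `f(u) = max_i (u i - w i) - min_i (u i - w i)` over the
simplex, and is the unique such minimizer. -/
theorem stmt18 (n : ℕ) (w v : Fin (n + 1) → ℝ) (hw : ∑ i, w i = 1)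
    (hv0 : ∀ i, 0 ≤ v i) (hv1 : ∑ i, v i = 1)
    (hmin : ∀ u : Fin (n + 1) → ℝ, (∀ i, 0 ≤ u i) → ∑ i, u i = 1 →
      ∑ i, (v i - w i) ^ 2 ≤ ∑ i, (u i - w i) ^ 2) :
    (∀ u : Fin (n + 1) → ℝ, (∀ i, 0 ≤ u i) → ∑ i, u i = 1 →
      Finset.univ.sup' Finset.univ_nonempty (fun i => v i - w i)
          - Finset.univ.inf' Finset.univ_nonempty (fun i => v i - w i)
        ≤ Finset.univ.sup' Finset.univ_nonempty (fun i => u i - w i)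
          - Finset.univ.inf' Finset.univ_nonempty (fun i => u i - w i)) ∧
    (∀ u : Fin (n + 1) → ℝ, (∀ i, 0 ≤ u i) → ∑ i, u i = 1 →
      Finset.univ.sup' Finset.univ_nonempty (fun i => u i - w i)
          - Finset.univ.inf' Finset.univ_nonempty (fun i => u i - w i)
        = Finset.univ.sup' Finset.univ_nonempty (fun i => v i - w i)
          - Finset.univ.inf' Finset.univ_nonempty (fun i => v i - w i) → u = v) :=
  stmt18_general n w v hv0 hv1 hmin
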